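/- arXiv:1309.7729 — 13 statements merged into one kernel-verified Lean document; each statement's English description precedes it below -/
import Mathlib

section
/- Any two congruences α and β on a right loop S permute: the relation compositions α∘β and β∘α coincide, where x (α∘β) y means there exists z ∈ S with x α z and z β y. -/
/-- A right loop: `1` is a two-sided identity and for all `a b` there is a
unique `y` with `y ∘ b = a`, denoted `div a b`. -/
structure RightLoop (S : Type*) where
  op : S → S → S
  one : S
  div : S → S → S
  one_op : ∀ x, op one x = x
  op_one : ∀ x, op x one = x
  div_op : ∀ a b, op (div a b) b = a
  eq_div_of_op_eq : ∀ a b y, op y b = a → y = div a b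

/-- A congruence on a right loop with operations `op` and `div`: an equivalence
relation compatible with both operations. -/
def IsRLCongruence {S : Type*} (op div : S → S → S) (α : S → S → Prop) : Prop :=
  Equivalence α ∧
    ∀ x u y v, α x u → α y v → α (op x y) (op u v) ∧ α (div x y) (div u v)

/-- `σ(S)_1`, the set of elements associating with all pairs. -/
def sigma1 {S : Type*} (L : RightLoop S) : Set S :=
  {x | ∀ y z, L.op x (L.op y z) = L.op (L.op x y) z}

/-- `γ` centralizes `β` by means of the centering congruence `D`. -/
def IsCentering {S : Type*} (op div : S → S → S) (β γ : S → S → Prop)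
    (D : S × S → S × S → Prop) : Prop :=
  -- D is an equivalence relation on β
  (∀ x y, β x y → D (x, y) (x, y)) ∧
  (∀ p q, D p q → D q p) ∧
  (∀ p q r, D p q → D q r → D p r) ∧
  -- D is compatible with the componentwise operations
  (∀ p q p' q', D p q → D p' q' →
      D (op p.1 p'.1, op p.2 p'.2) (op q.1 q'.1, op q.2 q'.2) ∧
      D (div p.1 p'.1, div p.2 p'.2) (div q.1 q'.1, div q.2 q'.2)) ∧
  -- (i)
  (∀ x y u v, β x y → β u v → D (x, y) (u, v) → γ x u) ∧
  -- (ii) : (u,v) ↦ u is a bijection from the D-class of (x,y) onto the γ-class of x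
  (∀ x y, β x y →
      (∀ u v v', β u v → β u v' → D (x, y) (u, v) → D (x, y) (u, v') → v = v') ∧
      (∀ u, γ x u → ∃ v, β u v ∧ D (x, y) (u, v))) ∧
  -- (iii)
  (∀ x y, γ x y → D (x, x) (y, y)) ∧
  -- (iv)
  (∀ x y u v, β x y → β u v → D (x, y) (u, v) → D (y, x) (v, u)) ∧
  -- (v)
  (∀ x y z u v w, β x y → β u v → β y z → β v w →
      D (x, y) (u, v) → D (y, z) (v, w) → D (x, z) (u, w))

/-- Any two congruences on a right loop permute. -/
theorem congruences_permute {S : Type*} (L : RightLoop S) (α β : S → S → Prop)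
    (hα : IsRLCongruence L.op L.div α) (hβ : IsRLCongruence L.op L.div β) :
    ∀ x y : S, (∃ z, α x z ∧ β z y) ↔ (∃ z, β x z ∧ α z y) := by
  have key : ∀ (α β : S → S → Prop), IsRLCongruence L.op L.div α →
      IsRLCongruence L.op L.div β → ∀ x y, (∃ z, α x z ∧ β z y) → ∃ w, β x w ∧ α w y := by
    intro α β hα hβ x y ⟨z, hxz, hzy⟩
    refine ⟨L.op (L.div x z) y, ?_, ?_⟩
    · have : β (L.op (L.div x z) z) (L.op (L.div x z) y) :=
        (hβ.2 _ _ _ _ (hβ.1.refl _) hzy).1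
      rwa [L.div_op] at this
    · have h1 : α (L.div x z) (L.div z z) := (hα.2 _ _ _ _ hxz (hα.1.refl z)).2
      have hzz : L.div z z = L.one := (L.eq_div_of_op_eq z z L.one (L.one_op z)).symm
      rw [hzz] at h1
      have : α (L.op (L.div x z) y) (L.op L.one y) :=
        (hα.2 _ _ _ _ h1 (hα.1.refl y)).1
      rwa [L.one_op] at this
  intro x y
  exact ⟨key α β hα hβ x y, key β α hβ hα x y⟩
end

section
/- Let S be a right loop and let α be a nonempty subset of S × S closed under the componentwise operations ∘ and / (a right subloop of S × S). Then α is a congruence on S if and only if α contains the diagonal Δ(S) = {(x,x) | x ∈ S}. -/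
/-- A nonempty subset of `S × S` closed under the componentwise operations is a
congruence on `S` if and only if it contains the diagonal. -/
theorem congruence_iff_contains_diagonal {S : Type*} (L : RightLoop S)
    (α : Set (S × S)) (hne : α.Nonempty)
    (hclosed : ∀ p ∈ α, ∀ q ∈ α,
      (L.op p.1 q.1, L.op p.2 q.2) ∈ α ∧ (L.div p.1 q.1, L.div p.2 q.2) ∈ α) :
    IsRLCongruence L.op L.div (fun x y => (x, y) ∈ α) ↔ ∀ x : S, (x, x) ∈ α := by
  have hdiv_self : ∀ a : S, L.div a a = L.one := fun a =>
    (L.eq_div_of_op_eq a a L.one (L.one_op a)).symm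
  constructor
  · rintro ⟨heq, -⟩ x
    exact heq.refl x
  · intro hdiag
    have hsymm : ∀ {x y : S}, (x, y) ∈ α → (y, x) ∈ α := by
      intro x y hxy
      have h1 := (hclosed (y, y) (hdiag y) (x, y) hxy).2
      have h2 := (hclosed _ h1 (x, x) (hdiag x)).1
      simpa [L.div_op, L.one_op, hdiv_self] using h2
    refine ⟨⟨hdiag, fun {x y} => hsymm, ?_⟩, ?_⟩
    · -- transitive
      intro x y z hxy hyz
      have h1 := (hclosed (x, y) hxy (z, y) (hsymm hyz)).2
      have h2 := (hclosed _ h1 (z, z) (hdiag z)).1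
      simpa [L.div_op, L.one_op, hdiv_self] using h2
    · intro x u y v hxu hyv
      exact hclosed (x, u) hxu (y, v) hyv
end

section
/- Let G be a finite group, H a subgroup of G, and S a normalized right transversal of H in G with G = ⟨S⟩. Then for x ∈ S one has x ∘ (y ∘ z) = (x ∘ y) ∘ z for all y, z ∈ S if and only if x belongs to the normalizer N_G(H) of H in G; that is, σ(S)_1 = S ∩ N_G(H). -/
/-- `S` is a normalized right transversal of the subgroup `H` in `G`: it contains `1`
and exactly one element of each right coset `Hg`. -/
def IsNRT {G : Type*} [Group G] (H : Subgroup G) (S : Set G) : Prop :=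
  (1 : G) ∈ S ∧ ∀ g : G, ∃! s, s ∈ S ∧ s * g⁻¹ ∈ H

/-- `op` is the binary operation on the transversal `S` determined by
`{x ∘ y} = Hxy ∩ S`. -/
def IsNRTOp {G : Type*} [Group G] (H : Subgroup G) (S : Set G)
    (op : G → G → G) : Prop :=
  ∀ x ∈ S, ∀ y ∈ S, op x y ∈ S ∧ op x y * (x * y)⁻¹ ∈ H

/-- `div` is the right division of the right loop `(S, op)`:
`div a b` is the (unique) element of `S` with `div a b ∘ b = a`. -/
def IsNRTDiv {G : Type*} (S : Set G) (op div : G → G → G) : Prop :=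
  ∀ a ∈ S, ∀ b ∈ S, div a b ∈ S ∧ op (div a b) b = a

/-- `α` is a congruence on the right loop `(S, op, div)`: an equivalence relation on
`S` compatible with both operations. -/
def IsCongOn {G : Type*} (S : Set G) (op div : G → G → G)
    (α : G → G → Prop) : Prop :=
  (∀ x ∈ S, α x x) ∧
  (∀ x ∈ S, ∀ y ∈ S, α x y → α y x) ∧
  (∀ x ∈ S, ∀ y ∈ S, ∀ z ∈ S, α x y → α y z → α x z) ∧
  (∀ x ∈ S, ∀ u ∈ S, ∀ y ∈ S, ∀ v ∈ S, α x u → α y v →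
      α (op x y) (op u v) ∧ α (div x y) (div u v))

/-- For a finite group `G`, a subgroup `H` and an NRT `S` of `H` in `G` generating `G`,
an element `x ∈ S` associates with all pairs of elements of `S` if and only if
`x ∈ N_G(H)`; that is, `σ(S)_1 = S ∩ N_G(H)`. -/
theorem sigma1_eq_inter_normalizer {G : Type*} [Group G] [Fintype G]
    (H : Subgroup G) (S : Set G) (hS : IsNRT H S)
    (op : G → G → G) (hop : IsNRTOp H S op)
    (hgen : Subgroup.closure S = ⊤) :
    ∀ x ∈ S, (∀ y ∈ S, ∀ z ∈ S, op x (op y z) = op (op x y) z) ↔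
      x ∈ Subgroup.normalizer (H : Set G) := by
  -- the submonoid closure of S is everything
  have hmono : ∀ g : G, g ∈ Submonoid.closure S := by
    intro g
    have hinv : ∀ a ∈ Submonoid.closure S, a⁻¹ ∈ Submonoid.closure S := by
      intro a ha
      have h1 : a ^ orderOf a = 1 := pow_orderOf_eq_one a
      have h2 : a * a ^ (orderOf a - 1) = 1 := by
        rw [← pow_succ', Nat.sub_add_cancel (orderOf_pos a)]; exact h1
      rw [inv_eq_of_mul_eq_one_right h2]
      exact pow_mem ha _
    let L : Subgroup G := { toSubmonoid := Submonoid.closure S, inv_mem' := fun h => hinv _ h }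
    have : Subgroup.closure S ≤ L := (Subgroup.closure_le L).2 Submonoid.subset_closure
    rw [hgen] at this
    exact this (Subgroup.mem_top g)
  intro x hx
  constructor
  · intro hassoc
    -- conjugates of the "cocycle" generators land in H
    have hgenH : ∀ y ∈ S, ∀ z ∈ S, x * (op y z * (y * z)⁻¹) * x⁻¹ ∈ H := by
      intro y hy z hz
      have hyz := hop y hy z hz
      have hxy := hop x hx y hy
      have hA := (hop x hx (op y z) hyz.1).2
      have hB := (hop (op x y) hxy.1 z hz).2
      rw [hassoc y hy z hz] at hA
      have key : x * (op y z * (y * z)⁻¹) * x⁻¹ =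
          (op (op x y) z * (x * op y z)⁻¹)⁻¹ * (op (op x y) z * (op x y * z)⁻¹) *
            (op x y * (x * y)⁻¹ * (x * y) * z * (x * y * z)⁻¹) := by group
      rw [key]
      refine mul_mem (mul_mem (inv_mem hA) hB) ?_
      have : op x y * (x * y)⁻¹ * (x * y) * z * (x * y * z)⁻¹ = op x y * (x * y)⁻¹ := by group
      rw [this]; exact hxy.2
    -- the conjugation-preimage subgroup
    let K : Subgroup G :=
      { carrier := {h : G | x * h * x⁻¹ ∈ H}
        one_mem' := by simpa using one_mem H
        mul_mem' := by
          intro a b ha hb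
          have : x * (a * b) * x⁻¹ = (x * a * x⁻¹) * (x * b * x⁻¹) := by group
          simp only [Set.mem_setOf_eq] at *
          rw [this]; exact mul_mem ha hb
        inv_mem' := by
          intro a ha
          have : x * a⁻¹ * x⁻¹ = (x * a * x⁻¹)⁻¹ := by group
          simp only [Set.mem_setOf_eq] at *
          rw [this]; exact inv_mem ha }
    -- every element of G decomposes as k * s with k ∈ H ⊓ K, s ∈ S
    have main : ∀ g : G, ∃ k s, k ∈ H ∧ k ∈ K ∧ s ∈ S ∧ g = k * s := by
      intro g
      induction hmono g using Submonoid.closure_induction_right with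
      | one => exact ⟨1, 1, one_mem _, one_mem _, hS.1, (one_mul 1).symm⟩
      | mul_right a ha y hy ih =>
        obtain ⟨k, s, hkH, hkK, hsS, rfl⟩ := ih
        have hsy := hop s hsS y hy
        refine ⟨k * (op s y * (s * y)⁻¹)⁻¹, op s y,
          mul_mem hkH (inv_mem hsy.2), mul_mem hkK (inv_mem ?_), hsy.1, by group⟩
        exact hgenH s hsS y hy
    -- hence every h ∈ H lies in K
    have hconj : ∀ h ∈ H, x * h * x⁻¹ ∈ H := by
      intro h hh
      obtain ⟨k, s, hkH, hkK, hsS, hdec⟩ := main h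
      have hs1 : s = 1 := by
        have hu := hS.2 1
        have h1 : s ∈ S ∧ s * (1 : G)⁻¹ ∈ H := by
          constructor
          · exact hsS
          · have : s = k⁻¹ * h := by rw [hdec]; group
            rw [this]; simpa using mul_mem (inv_mem hkH) hh
        have h2 : (1 : G) ∈ S ∧ (1 : G) * (1 : G)⁻¹ ∈ H := ⟨hS.1, by simpa using one_mem H⟩
        exact hu.unique h1 h2
      rw [hs1, mul_one] at hdec
      exact hdec ▸ hkK
    have := Subgroup.mem_normalizer_fintype (S := (H : Set G)) (x := x) hconj
    rw [Subgroup.mem_normalizer_iff]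
    intro h
    exact this h
  · intro hxn y hy z hz
    rw [Subgroup.mem_normalizer_iff] at hxn
    have hyz := hop y hy z hz
    have hxy := hop x hx y hy
    have hu := hS.2 (x * y * z)
    have h1 : op x (op y z) ∈ S ∧ op x (op y z) * (x * y * z)⁻¹ ∈ H := by
      refine ⟨(hop x hx (op y z) hyz.1).1, ?_⟩
      have hA := (hop x hx (op y z) hyz.1).2
      have hB : x * (op y z * (y * z)⁻¹) * x⁻¹ ∈ H := (hxn _).1 hyz.2
      have key : op x (op y z) * (x * y * z)⁻¹ =
          (op x (op y z) * (x * op y z)⁻¹) * (x * (op y z * (y * z)⁻¹) * x⁻¹) := by group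
      rw [key]; exact mul_mem hA hB
    have h2 : op (op x y) z ∈ S ∧ op (op x y) z * (x * y * z)⁻¹ ∈ H := by
      refine ⟨(hop (op x y) hxy.1 z hz).1, ?_⟩
      have hB := (hop (op x y) hxy.1 z hz).2
      have key : op (op x y) z * (x * y * z)⁻¹ =
          (op (op x y) z * (op x y * z)⁻¹) * (op x y * (x * y)⁻¹) := by group
      rw [key]; exact mul_mem hB hxy.2
    exact hu.unique h1 h2
end

section
/- Let G be a group, H a subgroup of G, and S a normalized right transversal of H in G. If the normalizer N_G(H) is a normal subgroup of G, then the relation σ = {(x,y) ∈ S × S | y x⁻¹ ∈ N_G(H)} is a congruence on the right loop (S, ∘); its class of 1 is S ∩ N_G(H). -/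
/-- If the normalizer `N_G(H)` is normal in `G`, then the stability relation
`σ = {(x,y) | y * x⁻¹ ∈ N_G(H)}` is a congruence on the right loop `(S, ∘)`,
and its class of `1` is `S ∩ N_G(H)`. -/
theorem stability_congruence_of_normalizer_normal {G : Type*} [Group G]
    (H : Subgroup G) (S : Set G) (hS : IsNRT H S)
    (op div : G → G → G) (hop : IsNRTOp H S op) (hdiv : IsNRTDiv S op div)
    (hN : (Subgroup.normalizer (H : Set G)).Normal) :
    IsCongOn S op div (fun x y => y * x⁻¹ ∈ Subgroup.normalizer (H : Set G)) ∧
      {x ∈ S | x * (1 : G)⁻¹ ∈ Subgroup.normalizer (H : Set G)} = S ∩ (Subgroup.normalizer (H : Set G) : Set G) := by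
  haveI := hN
  have key : ∀ a b : G, b * a⁻¹ ∈ (Subgroup.normalizer (H : Set G)) ↔
      ((a : G ⧸ (Subgroup.normalizer (H : Set G))) = (b : G ⧸ (Subgroup.normalizer (H : Set G)))) := by
    intro a b
    rw [QuotientGroup.eq]
    exact hN.mem_comm_iff
  have hπop : ∀ x ∈ S, ∀ y ∈ S,
      ((op x y : G) : G ⧸ (Subgroup.normalizer (H : Set G))) = ((x : G ⧸ (Subgroup.normalizer (H : Set G))) * y) := by
    intro x hx y hy
    have := (key (x * y) (op x y)).mp (Subgroup.le_normalizer (hop x hx y hy).2)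
    simpa using this.symm
  constructor
  · refine ⟨?_, ?_, ?_, ?_⟩
    · intro x _; simpa using (Subgroup.normalizer (H : Set G)).one_mem
    · intro x _ y _ h
      have := (Subgroup.normalizer (H : Set G)).inv_mem h
      simpa using this
    · intro x _ y _ z _ h1 h2
      have := (Subgroup.normalizer (H : Set G)).mul_mem h2 h1
      simpa [mul_assoc] using this
    · intro x hx u hu y hy v hv hxu hyv
      rw [key] at hxu hyv
      constructor
      · refine (key _ _).mpr ?_
        rw [hπop x hx y hy, hπop u hu v hv, hxu, hyv]
      · refine (key _ _).mpr ?_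
        have h1 : ((div x y : G) : G ⧸ (Subgroup.normalizer (H : Set G))) * y = x := by
          rw [← hπop (div x y) (hdiv x hx y hy).1 y hy, (hdiv x hx y hy).2]
        have h2 : ((div u v : G) : G ⧸ (Subgroup.normalizer (H : Set G))) * v = u := by
          rw [← hπop (div u v) (hdiv u hu v hv).1 v hv, (hdiv u hu v hv).2]
        have e1 : ((div x y : G) : G ⧸ (Subgroup.normalizer (H : Set G))) = (x : G ⧸ (Subgroup.normalizer (H : Set G))) * (y : G ⧸ (Subgroup.normalizer (H : Set G)))⁻¹ :=
          eq_mul_inv_of_mul_eq h1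
        have e2 : ((div u v : G) : G ⧸ (Subgroup.normalizer (H : Set G))) = (u : G ⧸ (Subgroup.normalizer (H : Set G))) * (v : G ⧸ (Subgroup.normalizer (H : Set G)))⁻¹ :=
          eq_mul_inv_of_mul_eq h2
        rw [e1, e2, hxu, hyv]
  · ext x
    simp [Set.mem_setOf_eq, Set.mem_inter_iff]
end

section
/- Let S be a right loop and let β be a central congruence on S, i.e., S × S centralizes β by means of some centering congruence. Then every element x of the β-class β_1 of the identity satisfies (x ∘ y) ∘ z = x ∘ (y ∘ z) for all y, z ∈ S; that is, β_1 ⊆ σ(S)_1. -/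
/-- If `β` is a central congruence on a right loop `S` (i.e. `S × S` centralizes `β`
by means of some centering congruence), then the `β`-class of the identity is
contained in `σ(S)_1`. -/
theorem central_class_subset_sigma1 {S : Type*} (L : RightLoop S)
    (β : S → S → Prop) (hβ : IsRLCongruence L.op L.div β)
    (D : S × S → S × S → Prop)
    (hD : IsCentering L.op L.div β (fun _ _ => True) D) :
    ∀ x, β x L.one → x ∈ sigma1 L := by
  obtain ⟨hrefl, hsymm, htrans, hcompat, hi, hii, hiii, hiv, hv⟩ := hD
  obtain ⟨heq, hcomp⟩ := hβ
  -- key: if D (u,w) (u',w) with β u w, β u' w then u = u'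
  have key : ∀ u u' w, β u w → β u' w → D (u, w) (u', w) → u = u' := by
    intro u u' w huw hu'w hduu'
    have h1 : D (w, u) (w, u') := hiv u w u' w huw hu'w hduu'
    have h2 : D (w, u) (w, u) := hrefl w u (heq.symm huw)
    exact (hii w u (heq.symm huw)).1 w u u' (heq.symm huw) (heq.symm hu'w) h2 h1
  intro x hx y z
  have D0 : D (x, L.one) (x, L.one) := hrefl x L.one hx
  have Dy : D (y, y) (L.op y z, L.op y z) := hiii y (L.op y z) trivial
  have A := (hcompat (x, L.one) (x, L.one) (y, y) (L.op y z, L.op y z) D0 Dy).1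
  simp only [L.one_op] at A
  -- A : D (x∘y, y) (x∘(y∘z), y∘z)
  have Dz : D (z, z) (L.one, L.one) := hiii z L.one trivial
  have B := (hcompat (L.op x y, y) (L.op x (L.op y z), L.op y z) (z, z)
    (L.one, L.one) A Dz).1
  simp only [L.op_one] at B
  -- B : D ((x∘y)∘z, y∘z) (x∘(y∘z), y∘z)
  have b1 : β (L.op x y) y := by
    have := (hcomp x L.one y y hx (heq.refl y)).1
    rwa [L.one_op] at this
  have b2 : β (L.op (L.op x y) z) (L.op y z) :=
    (hcomp (L.op x y) y z z b1 (heq.refl z)).1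
  have b3 : β (L.op x (L.op y z)) (L.op y z) := by
    have := (hcomp x L.one (L.op y z) (L.op y z) hx (heq.refl _)).1
    rwa [L.one_op] at this
  exact (key _ _ _ b2 b3 B).symm
end

section
/- Let S be a right loop, let β and γ be congruences on S, and suppose γ centralizes β by means of a centering congruence (γ|β). Then for all b in the β-class β_1 of the identity and all c in the γ-class γ_1 of the identity, c ∘ b′ = b′ ∘ c, where b′ = 1/b is the left inverse of b. -/
/-- If `γ` centralizes `β` by means of a centering congruence, then every `b` in the
`β`-class of the identity and every `c` in the `γ`-class of the identity satisfy
`c ∘ b′ = b′ ∘ c`, where `b′ = 1/b`. -/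
theorem centralized_left_inverse_comm {S : Type*} (L : RightLoop S)
    (β γ : S → S → Prop)
    (hβ : IsRLCongruence L.op L.div β) (hγ : IsRLCongruence L.op L.div γ)
    (D : S × S → S × S → Prop) (hD : IsCentering L.op L.div β γ D) :
    ∀ b, β b L.one → ∀ c, γ c L.one →
      L.op c (L.div L.one b) = L.op (L.div L.one b) c := by
  obtain ⟨hβe, hβc⟩ := hβ
  obtain ⟨hγe, hγc⟩ := hγ
  obtain ⟨hrefl, hsymm, htrans, hcomp, hi, hii, hiii, hiv, hv⟩ := hD
  -- key claim: for all a with β a 1, c∘a = a∘c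
  have key : ∀ a, β a L.one → ∀ c, γ c L.one → L.op c a = L.op a c := by
    intro a ha c hc
    have h1a : β L.one a := hβe.symm ha
    have hcc : γ L.one c := hγe.symm hc
    have hDaa : D (a, L.one) (a, L.one) := hrefl a L.one ha
    have hDcc : D (L.one, L.one) (c, c) := hiii L.one c hcc
    -- multiply on the right
    have h1 := (hcomp (a, L.one) (a, L.one) (L.one, L.one) (c, c) hDaa hDcc).1
    -- multiply on the left
    have h2 := (hcomp (L.one, L.one) (c, c) (a, L.one) (a, L.one) hDcc hDaa).1
    simp only [L.op_one, L.one_op] at h1 h2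
    -- h1 : D (a, 1) (a∘c, c), h2 : D (a, 1) (c∘a, c)
    have hβac : β (L.op a c) c := by
      have := (hβc a L.one c c ha (hβe.refl c)).1
      simpa [L.one_op] using this
    have hβca : β (L.op c a) c := by
      have := (hβc c c a L.one (hβe.refl c) ha).1
      simpa [L.op_one] using this
    have h1' : D (L.one, a) (c, L.op a c) := hiv a L.one (L.op a c) c ha hβac h1
    have h2' : D (L.one, a) (c, L.op c a) := hiv a L.one (L.op c a) c ha hβca h2
    exact ((hii L.one a h1a).1 c (L.op a c) (L.op c a) (hβe.symm hβac) (hβe.symm hβca) h1' h2').symm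
  intro b hb c hc
  have h11 : L.div L.one L.one = L.one := (L.eq_div_of_op_eq L.one L.one L.one (L.op_one L.one)).symm
  have hb' : β (L.div L.one b) L.one := by
    have := (hβc L.one L.one b L.one (hβe.refl L.one) hb).2
    rwa [h11] at this
  exact key _ hb' c hc
end

section
/- Let S be a right loop and let β be a congruence on S centralized by γ = S × S by means of a centering congruence. Then b ∘ c = c ∘ b for all b in the β-class β_1 of the identity and all c ∈ S. -/
/-- If `β` is a congruence centralized by `γ = S × S`, then every element of the
`β`-class of the identity commutes with every element of `S`. -/
theorem central_class_commutes {S : Type*} (L : RightLoop S)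
    (β : S → S → Prop) (hβ : IsRLCongruence L.op L.div β)
    (D : S × S → S × S → Prop)
    (hD : IsCentering L.op L.div β (fun _ _ => True) D) :
    ∀ b, β b L.one → ∀ c, L.op b c = L.op c b := by
  obtain ⟨hrefl, hsymm, htrans, hcompat, hi, hii, hiii, hiv, hv⟩ := hD
  obtain ⟨heq, hop⟩ := hβ
  intro b hb c
  have hb1 : D (b, L.one) (b, L.one) := hrefl b L.one hb
  have hcc : D (L.one, L.one) (c, c) := hiii L.one c trivial
  -- β facts
  have hbc : β (L.op b c) c := by
    have := (hop b L.one c c hb (heq.refl c)).1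
    rwa [L.one_op] at this
  have hcb : β (L.op c b) c := by
    have := (hop c c b L.one (heq.refl c) hb).1
    rwa [L.op_one] at this
  have h1 : D (b, L.one) (L.op b c, c) := by
    have := (hcompat (b, L.one) (b, L.one) (L.one, L.one) (c, c) hb1 hcc).1
    simpa [L.op_one, L.one_op] using this
  have h2 : D (b, L.one) (L.op c b, c) := by
    have := (hcompat (L.one, L.one) (c, c) (b, L.one) (b, L.one) hcc hb1).1
    simpa [L.op_one, L.one_op] using this
  have h1' : D (L.one, b) (c, L.op b c) := hiv b L.one (L.op b c) c hb hbc h1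
  have h2' : D (L.one, b) (c, L.op c b) := hiv b L.one (L.op c b) c hb hcb h2
  exact (hii L.one b (heq.symm hb)).1 c (L.op b c) (L.op c b)
    (heq.symm hbc) (heq.symm hcb) h1' h2'
end

section
/- Let S be a right loop and let β be a central congruence on S (S × S centralizes β by means of some centering congruence). Then the β-class β_1 of the identity is closed under ∘ and /, and (β_1, ∘) is an abelian group. In particular, the center of a right loop is an abelian group. -/
/-- If `β` is a central congruence on a right loop `S`, then the `β`-class of the
identity is closed under `∘` and `/` and is an abelian group under `∘`. -/
theorem central_class_abelian_group {S : Type*} (L : RightLoop S)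
    (β : S → S → Prop) (hβ : IsRLCongruence L.op L.div β)
    (D : S × S → S × S → Prop)
    (hD : IsCentering L.op L.div β (fun _ _ => True) D) :
    β L.one L.one ∧
    (∀ b, β b L.one → ∀ c, β c L.one →
        β (L.op b c) L.one ∧ β (L.div b c) L.one ∧ L.op b c = L.op c b) ∧
    (∀ b, β b L.one → ∀ c, β c L.one → ∀ d, β d L.one →
        L.op b (L.op c d) = L.op (L.op b c) d) ∧
    (∀ b, β b L.one → L.op b L.one = b ∧ L.op L.one b = b) ∧
    (∀ b, β b L.one → ∃ c, β c L.one ∧ L.op b c = L.one ∧ L.op c b = L.one) := by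
  obtain ⟨heq, hcomp⟩ := hβ
  obtain ⟨Drefl, Dsymm, Dtrans, Dcomp, Di, Dii, Diii, Div, Dv⟩ := hD
  have h11 : β L.one L.one := heq.refl _
  have hdiv11 : L.div L.one L.one = L.one :=
    (L.eq_div_of_op_eq L.one L.one L.one (L.op_one L.one)).symm
  -- closure under op
  have hop : ∀ b, β b L.one → ∀ c, β c L.one → β (L.op b c) L.one := by
    intro b hb c hc
    have := (hcomp b L.one c L.one hb hc).1
    rwa [L.op_one] at this
  -- closure under div
  have hdiv : ∀ b, β b L.one → ∀ c, β c L.one → β (L.div b c) L.one := by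
    intro b hb c hc
    have := (hcomp b L.one c L.one hb hc).2
    rwa [hdiv11] at this
  -- commutativity
  have hcomm : ∀ b, β b L.one → ∀ c, β c L.one → L.op b c = L.op c b := by
    intro b hb c hc
    have h1b : β L.one b := heq.symm hb
    have h1 : D (L.one, b) (L.one, b) := Drefl _ _ h1b
    have h2 : D (L.one, L.one) (c, c) := Diii L.one c trivial
    have hA : D (L.one, b) (c, L.op b c) := by
      have := (Dcomp (L.one, b) (L.one, b) (L.one, L.one) (c, c) h1 h2).1
      simpa [L.one_op, L.op_one] using this
    have hB : D (L.one, b) (c, L.op c b) := by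
      have := (Dcomp (L.one, L.one) (c, c) (L.one, b) (L.one, b) h2 h1).1
      simpa [L.one_op, L.op_one] using this
    have hmem1 : β c (L.op b c) := heq.trans hc (heq.symm (hop b hb c hc))
    have hmem2 : β c (L.op c b) := heq.trans hc (heq.symm (hop c hc b hb))
    exact (Dii L.one b h1b).1 c (L.op b c) (L.op c b) hmem1 hmem2 hA hB
  -- associativity
  have hassoc : ∀ b, β b L.one → ∀ c, β c L.one → ∀ d, β d L.one →
      L.op b (L.op c d) = L.op (L.op b c) d := by
    intro b hb c hc d hd
    have hcd : β (L.op c d) L.one := hop c hc d hd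
    have h1x : β L.one (L.op c d) := heq.symm hcd
    have h2 : D (L.one, L.one) (b, b) := Diii L.one b trivial
    have hA : D (L.one, L.op c d) (b, L.op b (L.op c d)) := by
      have := (Dcomp (L.one, L.one) (b, b) (L.one, L.op c d) (L.one, L.op c d)
        h2 (Drefl _ _ h1x)).1
      simpa [L.one_op, L.op_one] using this
    have hDc : D (L.one, c) (b, L.op b c) := by
      have := (Dcomp (L.one, L.one) (b, b) (L.one, c) (L.one, c)
        h2 (Drefl _ _ (heq.symm hc))).1
      simpa [L.one_op, L.op_one] using this
    have hB : D (L.one, L.op c d) (b, L.op (L.op b c) d) := by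
      have := (Dcomp (L.one, c) (b, L.op b c) (L.one, d) (L.one, d)
        hDc (Drefl _ _ (heq.symm hd))).1
      simpa [L.one_op, L.op_one] using this
    have hmem1 : β b (L.op b (L.op c d)) := heq.trans hb (heq.symm (hop b hb _ hcd))
    have hmem2 : β b (L.op (L.op b c) d) :=
      heq.trans hb (heq.symm (hop _ (hop b hb c hc) d hd))
    exact (Dii L.one (L.op c d) h1x).1 b _ _ hmem1 hmem2 hA hB
  refine ⟨h11, fun b hb c hc => ⟨hop b hb c hc, hdiv b hb c hc, hcomm b hb c hc⟩,
    hassoc, fun b _ => ⟨L.op_one b, L.one_op b⟩, ?_⟩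
  intro b hb
  refine ⟨L.div L.one b, ?_, ?_, L.div_op L.one b⟩
  · have := (hcomp L.one L.one b L.one h11 hb).2
    rwa [hdiv11] at this
  · have hc : β (L.div L.one b) L.one := by
      have := (hcomp L.one L.one b L.one h11 hb).2
      rwa [hdiv11] at this
    rw [hcomm b hb _ hc, L.div_op]
end

section
/- Let G be a group, H a subgroup of G, and S a normalized right transversal of H in G. If x ∈ S lies in the center Z(G) of G, then x ∘ (y ∘ z) = (y ∘ x) ∘ z for all y, z ∈ S. -/
/-- If `x ∈ S` lies in the center of `G`, then `x ∘ (y ∘ z) = (y ∘ x) ∘ z` for all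
`y, z ∈ S`. -/
theorem central_element_op_assoc {G : Type*} [Group G]
    (H : Subgroup G) (S : Set G) (hS : IsNRT H S)
    (op : G → G → G) (hop : IsNRTOp H S op)
    (x : G) (hxS : x ∈ S) (hx : x ∈ Subgroup.center G) :
    ∀ y ∈ S, ∀ z ∈ S, op x (op y z) = op (op y x) z := by
  intro y hyS z hzS
  rw [Subgroup.mem_center_iff] at hx
  obtain ⟨haS, ha⟩ := hop y hyS z hzS
  obtain ⟨hbS, hb⟩ := hop y hyS x hxS
  obtain ⟨h1S, h1⟩ := hop x hxS _ haS
  obtain ⟨h2S, h2⟩ := hop _ hbS z hzS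
  obtain ⟨s, _, hu⟩ := hS.2 (x * y * z)
  have e1 : op x (op y z) * (x * y * z)⁻¹ ∈ H := by
    have key : op x (op y z) * (x * y * z)⁻¹ =
        (op x (op y z) * (x * op y z)⁻¹) * (x * (op y z * (y * z)⁻¹) * x⁻¹) := by group
    have hconj : x * (op y z * (y * z)⁻¹) * x⁻¹ = op y z * (y * z)⁻¹ := by
      rw [← hx]; group
    rw [key, hconj]
    exact mul_mem h1 ha
  have e2 : op (op y x) z * (x * y * z)⁻¹ ∈ H := by
    have key : op (op y x) z * (x * y * z)⁻¹ =
        (op (op y x) z * (op y x * z)⁻¹) * (op y x * (y * x)⁻¹) := by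
      rw [← hx y]; group
    rw [key]
    exact mul_mem h2 hb
  exact (hu _ ⟨h1S, e1⟩).trans (hu _ ⟨h2S, e2⟩).symm
end

section
/- Let G be a group, H a subgroup of G, and S a normalized right transversal of H in G. Let x ∈ S lie in the center Z(G) of G and suppose y ∘ (x ∘ z) = (y ∘ x) ∘ z for all y, z ∈ S. Then y/(x ∘ z) = x′ ∘ (y/z) for all y, z ∈ S, where x′ = 1/x is the left inverse of x in (S, ∘). -/
/-- Two elements of `S` in the same right coset of `H` are equal. -/
lemma nrt_unique {G : Type*} [Group G] {H : Subgroup G} {S : Set G}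
    (hS : IsNRT H S) {a b : G} (ha : a ∈ S) (hb : b ∈ S) (hab : a * b⁻¹ ∈ H) :
    a = b := by
  obtain ⟨s, _, huniq⟩ := hS.2 b
  have h1 : a = s := huniq a ⟨ha, hab⟩
  have h2 : b = s := huniq b ⟨hb, by simpa using H.one_mem⟩
  rw [h1, h2]

/-- Let `x ∈ S` lie in the center of `G` and suppose `y ∘ (x ∘ z) = (y ∘ x) ∘ z` for
all `y, z ∈ S`. Then `y/(x ∘ z) = x′ ∘ (y/z)` for all `y, z ∈ S`, where `x′ = 1/x`. -/
theorem central_element_div {G : Type*} [Group G]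
    (H : Subgroup G) (S : Set G) (hS : IsNRT H S)
    (op div : G → G → G) (hop : IsNRTOp H S op) (hdiv : IsNRTDiv S op div)
    (x : G) (hxS : x ∈ S) (hx : x ∈ Subgroup.center G)
    (hassoc : ∀ y ∈ S, ∀ z ∈ S, op y (op x z) = op (op y x) z) :
    ∀ y ∈ S, ∀ z ∈ S, div y (op x z) = op (div (1 : G) x) (div y z) := by
  intro y hyS z hzS
  set x' := div (1 : G) x with hx'def
  obtain ⟨hx'S, hx'x⟩ := hdiv 1 hS.1 x hxS
  -- x' * x ∈ H
  have hx'xH : x' * x ∈ H := by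
    have := (hop x' hx'S x hxS).2
    rw [hx'x] at this
    simpa using H.inv_mem this
  obtain ⟨hwS, hwz⟩ := hdiv y hyS z hzS
  set w := div y z with hwdef
  obtain ⟨hAS, hAH⟩ := hop x' hx'S w hwS
  set A := op x' w with hAdef
  -- Step 1: op A x = w
  have hAx : op A x = w := by
    obtain ⟨hAxS, hAxH⟩ := hop A hAS x hxS
    apply nrt_unique hS hAxS hwS
    have hxw : w⁻¹ * x = x * w⁻¹ := (Subgroup.mem_center_iff.mp hx) w⁻¹
    have key : op A x * w⁻¹ = (op A x * (A * x)⁻¹) * (A * (x' * w)⁻¹) * (x' * x) := by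
      have h2 : A * x * w⁻¹ = (A * (x' * w)⁻¹) * (x' * x) := by
        rw [mul_assoc, ← hxw, mul_inv_rev]
        group
      rw [mul_assoc, ← h2]
      group
    rw [key]
    exact H.mul_mem (H.mul_mem hAxH hAH) hx'xH
  -- Step 2: op A (op x z) = y
  have hAxz : op A (op x z) = y := by
    rw [hassoc A hAS z hzS, hAx, hwz]
  -- Step 3: uniqueness
  obtain ⟨hbS, _⟩ := hop x hxS z hzS
  obtain ⟨hdS, hdb⟩ := hdiv y hyS (op x z) hbS
  apply nrt_unique hS hdS hAS
  have h1 : y * (div y (op x z) * op x z)⁻¹ ∈ H := by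
    have := (hop _ hdS _ hbS).2
    rw [hdb] at this
    exact this
  have h2 : y * (A * op x z)⁻¹ ∈ H := by
    have := (hop A hAS _ hbS).2
    rw [hAxz] at this
    exact this
  have key : div y (op x z) * A⁻¹ =
      (y * (div y (op x z) * op x z)⁻¹)⁻¹ * (y * (A * op x z)⁻¹) := by
    group
  rw [key]
  exact H.mul_mem (H.inv_mem h1) h2
end

section
/- Let G be a finite group, H a subgroup with trivial core in G, and S a normalized right transversal of H in G with G = ⟨S⟩. Suppose there is a central congruence β on the right loop (S, ∘) whose class of 1 equals σ(S)_1 = S ∩ N_G(H) (that is, σ(S)_1 is the center of S). Then S ∩ N_G(H) ⊆ Z(G) and N_G(H) = H · Z(G). -/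
/-- `γ` centralizes `β` by means of the centering congruence `D` on the right loop
`(S, op, div)`. -/
def IsCenteringOn {G : Type*} (S : Set G) (op div : G → G → G)
    (β γ : G → G → Prop) (D : G × G → G × G → Prop) : Prop :=
  -- D is an equivalence relation on β
  (∀ x ∈ S, ∀ y ∈ S, β x y → D (x, y) (x, y)) ∧
  (∀ p q, D p q → D q p) ∧
  (∀ p q r, D p q → D q r → D p r) ∧
  -- D is compatible with the componentwise operations
  (∀ p q p' q', D p q → D p' q' →
      D (op p.1 p'.1, op p.2 p'.2) (op q.1 q'.1, op q.2 q'.2) ∧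
      D (div p.1 p'.1, div p.2 p'.2) (div q.1 q'.1, div q.2 q'.2)) ∧
  -- (i)
  (∀ p q, D p q → γ p.1 q.1) ∧
  -- (ii) : (u,v) ↦ u is a bijection from the D-class of (x,y) onto the γ-class of x
  (∀ x ∈ S, ∀ y ∈ S, β x y →
      (∀ u v v', D (x, y) (u, v) → D (x, y) (u, v') → v = v') ∧
      (∀ u ∈ S, γ x u → ∃ v ∈ S, β u v ∧ D (x, y) (u, v))) ∧
  -- (iii)
  (∀ x ∈ S, ∀ y ∈ S, γ x y → D (x, x) (y, y)) ∧
  -- (iv)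
  (∀ p q, D p q → D (p.2, p.1) (q.2, q.1)) ∧
  -- (v)
  (∀ x y z u v w, D (x, y) (u, v) → D (y, z) (v, w) → D (x, z) (u, w))

/-- Suppose `G` is finite, `H` has trivial core, `G = ⟨S⟩`, and some central
congruence `β` on the right loop `(S, ∘)` has `1`-class equal to
`σ(S)_1 = S ∩ N_G(H)` (that is, `σ(S)_1` is the center of `S`).  Then
`S ∩ N_G(H) ⊆ Z(G)` and `N_G(H) = H ⬝ Z(G)`. -/
theorem center_eq_sigma1_necessary {G : Type*} [Group G] [Fintype G]
    (H : Subgroup G) (S : Set G) (hS : IsNRT H S)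
    (hcore : H.normalCore = ⊥)
    (op div : G → G → G) (hop : IsNRTOp H S op) (hdiv : IsNRTDiv S op div)
    (hgen : Subgroup.closure S = ⊤)
    (β : G → G → Prop) (hβ : IsCongOn S op div β)
    (D : G × G → G × G → Prop)
    (hD : IsCenteringOn S op div β (fun _ _ => True) D)
    (hclass : ∀ x ∈ S, (β x 1 ↔ x ∈ Subgroup.normalizer (H : Set G))) :
    S ∩ (Subgroup.normalizer (H : Set G) : Set G) ⊆ (Subgroup.center G : Set G) ∧
      (∀ g : G, g ∈ Subgroup.normalizer (H : Set G) ↔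
        ∃ h ∈ H, ∃ z ∈ Subgroup.center G, g = h * z) := by
  obtain ⟨h1S, huniq⟩ := hS
  -- `1` is a two-sided identity for `op` on `S`
  have hop1 : ∀ v ∈ S, op 1 v = v := by
    intro v hv
    obtain ⟨hmem, hH⟩ := hop 1 h1S v hv
    rw [one_mul] at hH
    exact (huniq v).unique ⟨hmem, hH⟩ ⟨hv, by simpa using H.one_mem⟩
  have hopv1 : ∀ v ∈ S, op v 1 = v := by
    intro v hv
    obtain ⟨hmem, hH⟩ := hop v hv 1 h1S
    rw [mul_one] at hH
    exact (huniq v).unique ⟨hmem, hH⟩ ⟨hv, by simpa using H.one_mem⟩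
  obtain ⟨Dref, Dsym, Dtra, Dcomp, -, Dbij, Ddiag, Dswap, -⟩ := hD
  -- main claim: elements of S ∩ N(H) are central in G
  have hcent : ∀ x ∈ S, x ∈ Subgroup.normalizer (H : Set G) → x ∈ Subgroup.center G := by
    intro x hx hxN
    have hβx1 : β x 1 := (hclass x hx).2 hxN
    have hβ1x : β 1 x := hβ.2.1 x hx 1 h1S hβx1
    have hxx : D (x, 1) (x, 1) := Dref x hx 1 h1S hβx1
    -- x commutes with all of S in the loop
    have comm : ∀ u ∈ S, op x u = op u x := by
      intro u hu
      have hduu : D (u, u) (1, 1) := Ddiag u hu 1 h1S trivial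
      have c1 : D (op x u, op 1 u) (op x 1, op 1 1) :=
        (Dcomp (x, 1) (x, 1) (u, u) (1, 1) hxx hduu).1
      have c2 : D (op u x, op u 1) (op 1 x, op 1 1) :=
        (Dcomp (u, u) (1, 1) (x, 1) (x, 1) hduu hxx).1
      rw [hop1 u hu, hopv1 x hx, hop1 1 h1S] at c1
      rw [hopv1 u hu, hop1 x hx, hop1 1 h1S] at c2
      have a1 := Dswap _ _ (Dsym _ _ c1)
      have a2 := Dswap _ _ (Dsym _ _ c2)
      exact (Dbij 1 h1S x hx hβ1x).1 u (op x u) (op u x) a1 a2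
    -- x commutes with all of S in G, modulo H
    have hXs : ∀ s ∈ S, x * s * x⁻¹ * s⁻¹ ∈ H := by
      intro s hs
      have h1 := (hop x hx s hs).2
      have h2 := (hop s hs x hx).2
      rw [← comm s hs] at h2
      have hm := H.mul_mem (H.inv_mem h1) h2
      have key : (op x s * (x * s)⁻¹)⁻¹ * (op x s * (s * x)⁻¹)
          = x * s * x⁻¹ * s⁻¹ := by group
      rwa [key] at hm
    have hx' : ∀ h ∈ H, x * h * x⁻¹ ∈ H := fun h hh =>
      (Subgroup.mem_normalizer_iff.mp hxN h).mp hh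
    -- x commutes with all of G, modulo H
    have hR : ∀ b : G, x * b * x⁻¹ * b⁻¹ ∈ H := by
      intro b
      obtain ⟨s, ⟨hsS, hsb⟩, -⟩ := huniq b
      have e : x * b * x⁻¹ * b⁻¹
          = (x * (s * b⁻¹)⁻¹ * x⁻¹) * (x * s * x⁻¹ * s⁻¹) * (s * b⁻¹) := by group
      rw [e]
      exact H.mul_mem (H.mul_mem (hx' _ (H.inv_mem hsb)) (hXs s hsS)) hsb
    -- hence commutators of x land in the normal core, which is trivial
    have hcore' : ∀ g : G, x * g * x⁻¹ * g⁻¹ = 1 := by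
      intro g
      have hmemcore : x * g * x⁻¹ * g⁻¹ ∈ H.normalCore := by
        intro b
        have e : b * (x * g * x⁻¹ * g⁻¹) * b⁻¹
            = (x * b * x⁻¹ * b⁻¹)⁻¹ * (x * (b * g) * x⁻¹ * (b * g)⁻¹) := by group
        rw [e]
        exact H.mul_mem (H.inv_mem (hR b)) (hR (b * g))
      rw [hcore] at hmemcore
      simpa using hmemcore
    rw [Subgroup.mem_center_iff]
    intro g
    have h := hcore' g
    rw [mul_inv_eq_one, mul_inv_eq_iff_eq_mul] at h
    exact h.symm
  have hzN : ∀ z ∈ Subgroup.center G, z ∈ Subgroup.normalizer (H : Set G) := by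
    intro z hz
    rw [Subgroup.mem_normalizer_iff]
    intro h
    have hc := Subgroup.mem_center_iff.mp hz h
    have e : z * h * z⁻¹ = h := by rw [← hc]; group
    rw [e]
  constructor
  · intro x hx
    exact hcent x hx.1 hx.2
  · intro g
    constructor
    · intro hg
      obtain ⟨s, ⟨hsS, hsg⟩, -⟩ := huniq g
      have hsN : s ∈ Subgroup.normalizer (H : Set G) := by
        have e : s = (s * g⁻¹) * g := by group
        rw [e]
        exact mul_mem (Subgroup.le_normalizer hsg) hg
      exact ⟨(s * g⁻¹)⁻¹, H.inv_mem hsg, s, hcent s hsS hsN, by group⟩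
    · rintro ⟨h, hh, z, hz, rfl⟩
      exact mul_mem (Subgroup.le_normalizer hh) (hzN z hz)
end

section
/- Let G = D₁₈ = ⟨x, y | x² = y⁹ = 1, xyx = y⁸⟩ be the dihedral group of order 18, let H = {1, x}, and let S = {1, xy, xy², ..., xy⁸}. Then S is a normalized right transversal of H in G, and the right loop (S, ∘) is simple: every congruence on (S, ∘) is either the diagonal relation or all of S × S. -/
namespace DTSAux

open DihedralGroup

abbrev G9 := DihedralGroup 9

/-- canonical representative of the coset indexed by `i` -/
def c (i : ZMod 9) : G9 := if i = 0 then 1 else sr i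

/-- index of a group element -/
def idx : G9 → ZMod 9
  | .r i => i
  | .sr i => i

lemma inv_r (i : ZMod 9) : (r i : G9)⁻¹ = r (-i) := rfl
lemma inv_sr (i : ZMod 9) : (sr i : G9)⁻¹ = sr i := rfl

lemma idx_c (i : ZMod 9) : idx (c i) = i := by
  unfold c
  split_ifs with h
  · simp [idx, one_def, h, -r_zero]
  · rfl

lemma c_inj {i j : ZMod 9} (h : c i = c j) : i = j := by
  have := congrArg idx h
  simpa [idx_c] using this

lemma mem_H_iff (h : G9) :
    h ∈ Subgroup.zpowers (sr 0) ↔ h = 1 ∨ h = sr 0 := by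
  constructor
  · rintro ⟨n, rfl⟩
    have h2 : (sr 0 : G9) ^ (2 : ℤ) = 1 := by decide
    rcases Int.even_or_odd n with ⟨k, hk⟩ | ⟨k, hk⟩
    · left
      show (sr 0 : G9) ^ n = 1
      rw [hk, ← two_mul, zpow_mul, h2, one_zpow]
    · right
      show (sr 0 : G9) ^ n = sr 0
      rw [hk, zpow_add, zpow_mul, h2, one_zpow, one_mul, zpow_one]
  · rintro (rfl | rfl)
    · exact one_mem _
    · exact Subgroup.mem_zpowers _

lemma key (g : G9) (k : ZMod 9)
    (h : c k * g⁻¹ ∈ Subgroup.zpowers (sr 0)) : k = idx g := by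
  rw [mem_H_iff] at h
  by_cases hk : k = 0
  · cases g with
    | r j =>
      simp only [c, hk, if_pos, idx, inv_r, one_mul, one_def] at h ⊢
      rcases h with h | h <;> simp_all [-r_zero]
    | sr j =>
      simp only [c, hk, if_pos, idx, inv_sr, one_mul, one_def] at h ⊢
      rcases h with h | h <;> simp_all [-r_zero]
  · cases g with
    | r j =>
      simp only [c, hk, if_neg, idx, inv_r, sr_mul_r, one_def] at h ⊢
      rcases h with h | h <;> simp_all [-r_zero]
      linear_combination h
    | sr j =>
      simp only [c, hk, if_neg, idx, inv_sr, sr_mul_sr, one_def] at h ⊢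
      rcases h with h | h <;> simp_all [-r_zero]
      linear_combination -h

lemma key_ex (g : G9) : c (idx g) * g⁻¹ ∈ Subgroup.zpowers (sr 0) := by
  rw [mem_H_iff]
  cases g with
  | r j =>
    by_cases hj : j = 0 <;>
      simp [c, idx, hj, inv_r, one_def, r_mul_r, sr_mul_r, -r_zero]
  | sr j =>
    by_cases hj : j = 0 <;>
      simp [c, idx, hj, inv_sr, one_def, sr_mul_sr, -r_zero]

/-- the loop operation on indices -/
def f (i j : ZMod 9) : ZMod 9 := if i = 0 then j else if j = 0 then i else j - i

/-- the loop right division on indices -/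
def gd (a b : ZMod 9) : ZMod 9 := if b = 0 then a else b - a

lemma idx_cc (i j : ZMod 9) : idx (c i * c j) = f i j := by
  unfold c f
  split_ifs with hi hj hj <;>
    simp_all [idx, one_def, r_mul_r, r_mul_sr, sr_mul_r, sr_mul_sr, -r_zero]

end DTSAux

open DihedralGroup DTSAux in
/-- In `G = D₁₈ = ⟨x, y⟩` with `H = {1, x}` and `S = {1, xy, …, xy⁸}` (here
`x = sr 0`, `y = r 1`, so `xyⁱ = sr i`), `S` is a normalized right transversal of `H`
in `G` and the right loop `(S, ∘)` is simple: every congruence on `(S, ∘)` is either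
the diagonal relation or all of `S × S`. -/
theorem dihedral_transversal_simple
    (S : Set (DihedralGroup 9))
    (hSdef : S = insert 1 {g | ∃ i : ZMod 9, i ≠ 0 ∧ g = DihedralGroup.sr i})
    (op div : DihedralGroup 9 → DihedralGroup 9 → DihedralGroup 9)
    (hop : IsNRTOp (Subgroup.zpowers (DihedralGroup.sr 0)) S op)
    (hdiv : IsNRTDiv S op div) :
    IsNRT (Subgroup.zpowers (DihedralGroup.sr 0)) S ∧
      ∀ α : DihedralGroup 9 → DihedralGroup 9 → Prop,
        IsCongOn S op div α →
          (∀ x ∈ S, ∀ y ∈ S, α x y → x = y) ∨ (∀ x ∈ S, ∀ y ∈ S, α x y) := by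
  have memS : ∀ g : G9, g ∈ S ↔ ∃ i, g = c i := by
    intro g
    rw [hSdef]
    simp only [Set.mem_insert_iff, Set.mem_setOf_eq]
    constructor
    · rintro (rfl | ⟨i, hi, rfl⟩)
      · exact ⟨0, by simp [c]⟩
      · exact ⟨i, by simp [c, hi]⟩
    · rintro ⟨i, rfl⟩
      by_cases hi : i = 0
      · left; simp [c, hi]
      · right; exact ⟨i, hi, by simp [c, hi]⟩
  have cmem : ∀ i, c i ∈ S := fun i => (memS _).2 ⟨i, rfl⟩
  -- the loop operation and division on indices
  have hopS : ∀ i j, op (c i) (c j) = c (f i j) := by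
    intro i j
    obtain ⟨h1, h2⟩ := hop (c i) (cmem i) (c j) (cmem j)
    obtain ⟨k, hk⟩ := (memS _).1 h1
    rw [hk] at h2 ⊢
    rw [key (c i * c j) k h2, idx_cc]
  have hdivS : ∀ a b, div (c a) (c b) = c (gd a b) := by
    intro a b
    obtain ⟨h1, h2⟩ := hdiv (c a) (cmem a) (c b) (cmem b)
    obtain ⟨s, hs⟩ := (memS _).1 h1
    rw [hs, hopS] at h2
    have hfs : f s b = a := c_inj h2
    rw [hs]
    congr 1
    by_cases hb : b = 0
    · simp only [gd, if_pos hb]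
      subst hb
      simp only [f] at hfs
      split_ifs at hfs with h0
      · rw [← hfs, h0]
      · exact hfs
    · simp only [gd, if_neg hb]
      simp only [f, if_neg hb] at hfs
      split_ifs at hfs with h0
      · rw [h0, ← hfs, sub_self]
      · linear_combination -hfs
  constructor
  · -- IsNRT
    refine ⟨by rw [hSdef]; exact Set.mem_insert _ _, fun g => ⟨c (idx g), ⟨cmem _, key_ex g⟩, ?_⟩⟩
    rintro s ⟨hs, hH⟩
    obtain ⟨k, rfl⟩ := (memS s).1 hs
    exact congrArg c (key g k hH)
  · -- simplicity
    intro α hα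
    obtain ⟨hrefl, hsymm, htrans, hcomp⟩ := hα
    by_cases hdiag : ∀ x ∈ S, ∀ y ∈ S, α x y → x = y
    · exact Or.inl hdiag
    right
    push_neg at hdiag
    obtain ⟨x, hx, y, hy, hxy, hne⟩ := hdiag
    obtain ⟨i, rfl⟩ := (memS x).1 hx
    obtain ⟨j, rfl⟩ := (memS y).1 hy
    set β : ZMod 9 → ZMod 9 → Prop := fun a b => α (c a) (c b) with hβ
    have βrefl : ∀ a, β a a := fun a => hrefl _ (cmem a)
    have βsymm : ∀ {a b}, β a b → β b a := fun h => hsymm _ (cmem _) _ (cmem _) h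
    have βtrans : ∀ {a b e}, β a b → β b e → β a e :=
      fun h1 h2 => htrans _ (cmem _) _ (cmem _) _ (cmem _) h1 h2
    have βop : ∀ {a u b v}, β a u → β b v → β (f a b) (f u v) := by
      intro a u b v h1 h2
      have := (hcomp _ (cmem a) _ (cmem u) _ (cmem b) _ (cmem v) h1 h2).1
      rwa [hopS, hopS] at this
    have βdiv : ∀ {a u b v}, β a u → β b v → β (gd a b) (gd u v) := by
      intro a u b v h1 h2
      have := (hcomp _ (cmem a) _ (cmem u) _ (cmem b) _ (cmem v) h1 h2).2
      rwa [hdivS, hdivS] at this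
    have L1 : ∀ {u v}, β u v → ∀ b, b ≠ 0 → β (b - u) (b - v) := by
      intro u v h b hb
      have := βdiv h (βrefl b)
      simpa [gd, hb] using this
    have L2 : ∀ {u v}, β u v → ∀ k, β (u + k) (v + k) := by
      intro u v h k
      by_cases hk : (1 : ZMod 9) + k = 0
      · have h1 := L1 h 2 (by decide)
        have h2 := L1 h1 (2 + k) (by intro h0; apply (by decide : (1:ZMod 9) ≠ 2); linear_combination hk - h0)
        have e1 : (2 + k) - ((2:ZMod 9) - u) = u + k := by ring
        have e2 : (2 + k) - ((2:ZMod 9) - v) = v + k := by ring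
        rwa [e1, e2] at h2
      · have h1 := L1 h 1 (by decide)
        have h2 := L1 h1 (1 + k) hk
        have e1 : (1 + k) - ((1:ZMod 9) - u) = u + k := by ring
        have e2 : (1 + k) - ((1:ZMod 9) - v) = v + k := by ring
        rwa [e1, e2] at h2
    have hij : i ≠ j := fun h => hne (by rw [h])
    have hd0 : β 0 (j - i) := by
      have := L2 hxy (-i)
      have e1 : i + -i = (0 : ZMod 9) := by ring
      have e2 : j + -i = j - i := by ring
      rwa [e1, e2] at this
    set d := j - i with hdd
    have hdne : d ≠ 0 := sub_ne_zero.mpr (Ne.symm hij)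
    have L3 : ∀ a, a ≠ 0 → β a (d - a) := by
      intro a ha
      have := βop (βrefl a) hd0
      simpa [f, ha, hdne] using this
    have hall0 : ∀ t, β 0 t := by
      intro t
      by_cases ht : t = 0
      · rw [ht]; exact βrefl 0
      set a := (5 : ZMod 9) * t with hadef
      have h9 : (9 : ZMod 9) * t = 0 := by
        have : (9 : ZMod 9) = 0 := by decide
        rw [this, zero_mul]
      have h2a : a + a = t := by rw [hadef]; linear_combination h9
      have ha : a ≠ 0 := fun h => ht (by rw [← h2a, h, add_zero])
      have h1 : β a (d + a) := by
        have := L2 hd0 a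
        rwa [zero_add] at this
      have h2 : β a (d - a) := L3 a ha
      have h3 : β (d + a) (d - a) := βtrans (βsymm h1) h2
      have h4 := L2 h3 (a - d)
      have e1 : (d + a) + (a - d) = t := by rw [← h2a]; ring
      have e2 : (d - a) + (a - d) = (0 : ZMod 9) := by ring
      rw [e1, e2] at h4
      exact βsymm h4
    intro x hx y hy
    obtain ⟨u, rfl⟩ := (memS x).1 hx
    obtain ⟨v, rfl⟩ := (memS y).1 hy
    have := L2 (hall0 (v - u)) u
    have e1 : (0 : ZMod 9) + u = u := by ring
    have e2 : (v - u) + u = v := by ring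
    rwa [e1, e2] at this
end

section
/- Let G = D₁₈ = ⟨x, y | x² = y⁹ = 1, xyx = y⁸⟩, H = {1, x}, and S = {1, xy, xy², ..., xy⁸}, a normalized right transversal of H in G. For s ∈ S let R_s : S → S be the right translation R_s(u) = u ∘ s, and let T = ⟨R_s : s ∈ S⟩ be the subgroup of the symmetric group on S generated by all right translations (T ≅ D₁₈). Then T is not quasiprimitive on S: there exists a nontrivial normal subgroup N of T (of order 3) whose action on S is not transitive; its orbits are {1, xy³, xy⁶}, {xy, xy⁴, xy⁷} and {xy², xy⁵, xy⁸}. -/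
namespace DNQPaux

open DihedralGroup

def el (i : ZMod 9) : DihedralGroup 9 := if i = 0 then 1 else sr i
def f (i j : ZMod 9) : ZMod 9 := if j = 0 then i else j - i

lemma key_f1 : ∀ k : ZMod 9, f (f k 1) 4 = k + 3 := by decide
lemma key_f2 : ∀ j k : ZMod 9, j ≠ 0 → f (k + 3) j + 3 = f k j := by decide
lemma key_f3 : ∀ k : ZMod 9, k + 3 + 3 + 3 = k := by decide
lemma key_f0 : ∀ k : ZMod 9, f k 0 = k := by decide
lemma key_ne : el 0 ≠ el 3 := by decide

lemma key_op : ∀ i j m : ZMod 9,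
    (el m = el i * el j → el m = el (f i j)) ∧
    (el m = sr 0 * (el i * el j) → el m = el (f i j)) := by decide

lemma key_orb : ∀ i j : ZMod 9,
    (el j = el i ∨ el j = el (i + 3) ∨ el j = el (i + 3 + 3)) ↔
    (((el i = 1 ∨ el i = sr 3 ∨ el i = sr 6) ∧ (el j = 1 ∨ el j = sr 3 ∨ el j = sr 6)) ∨
     ((el i = sr 1 ∨ el i = sr 4 ∨ el i = sr 7) ∧ (el j = sr 1 ∨ el j = sr 4 ∨ el j = sr 7)) ∨
     ((el i = sr 2 ∨ el i = sr 5 ∨ el i = sr 8) ∧ (el j = sr 2 ∨ el j = sr 5 ∨ el j = sr 8))) := by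
  decide

lemma key_notrans :
    ¬ (((el 0 = 1 ∨ el 0 = sr 3 ∨ el 0 = sr 6) ∧ (el 1 = 1 ∨ el 1 = sr 3 ∨ el 1 = sr 6)) ∨
     ((el 0 = sr 1 ∨ el 0 = sr 4 ∨ el 0 = sr 7) ∧ (el 1 = sr 1 ∨ el 1 = sr 4 ∨ el 1 = sr 7)) ∨
     ((el 0 = sr 2 ∨ el 0 = sr 5 ∨ el 0 = sr 8) ∧ (el 1 = sr 2 ∨ el 1 = sr 5 ∨ el 1 = sr 8))) := by
  decide

lemma mem_H {h : DihedralGroup 9} (hh : h ∈ Subgroup.zpowers (sr 0 : DihedralGroup 9)) :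
    h = 1 ∨ h = sr 0 := by
  rw [Subgroup.mem_zpowers_iff] at hh
  obtain ⟨k, rfl⟩ := hh
  have h2 : (sr 0 : DihedralGroup 9) ^ (2:ℤ) = 1 := by rw [zpow_two]; decide
  rcases Int.even_or_odd k with ⟨m, hm⟩ | ⟨m, hm⟩
  · left; rw [hm, ← two_mul, zpow_mul, h2, one_zpow]
  · right; rw [hm, zpow_add, zpow_mul, h2, one_zpow, zpow_one, one_mul]

lemma conj_mem_zpowers {P : Type*} [Group P] {g p : P}
    (hc : p * g * p⁻¹ = g ∨ p * g * p⁻¹ = g⁻¹) {h : P}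
    (hh : h ∈ Subgroup.zpowers g) : p * h * p⁻¹ ∈ Subgroup.zpowers g := by
  rw [Subgroup.mem_zpowers_iff] at hh
  obtain ⟨k, rfl⟩ := hh
  rw [← conj_zpow]
  rcases hc with hc | hc
  · rw [hc]; exact Subgroup.zpow_mem _ (Subgroup.mem_zpowers g) k
  · rw [hc]; exact Subgroup.zpow_mem _ (Subgroup.inv_mem _ (Subgroup.mem_zpowers g)) k

lemma inv_conj_of_conj {P : Type*} [Group P] {g p : P}
    (hc : p * g * p⁻¹ = g ∨ p * g * p⁻¹ = g⁻¹) :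
    p⁻¹ * g * p⁻¹⁻¹ = g ∨ p⁻¹ * g * p⁻¹⁻¹ = g⁻¹ := by
  rw [inv_inv]
  rcases hc with hc | hc
  · left
    have h1 := congrArg (· * p) hc
    simp only [mul_assoc, inv_mul_cancel, mul_one] at h1
    rw [mul_assoc, ← h1, ← mul_assoc, inv_mul_cancel, one_mul]
  · right
    have h1 := congrArg (· * p) hc
    simp only [mul_assoc, inv_mul_cancel, mul_one] at h1
    have h3 : p⁻¹ * g⁻¹ * p = g := by
      rw [mul_assoc, ← h1, ← mul_assoc, inv_mul_cancel, one_mul]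
    have h4 := congrArg (·⁻¹) h3
    simpa [mul_inv_rev, mul_assoc] using h4

lemma normalizer_of_conj {P : Type*} [Group P] {g p : P}
    (hc : p * g * p⁻¹ = g ∨ p * g * p⁻¹ = g⁻¹) :
    p ∈ Subgroup.normalizer (Subgroup.zpowers g : Set P) := by
  rw [Subgroup.mem_normalizer_iff]
  intro h
  constructor
  · exact conj_mem_zpowers hc
  · intro hmem
    have := conj_mem_zpowers (inv_conj_of_conj hc) hmem
    simpa [mul_assoc] using this

end DNQPaux


/-- In `G = D₁₈` with `H = {1, x}` and `S = {1, xy, …, xy⁸}` (here `x = sr 0`,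
`y = r 1`, so `xyⁱ = sr i`), the group `T` generated by the right translations
`R_s : u ↦ u ∘ s` of the right loop `(S, ∘)` is not quasiprimitive on `S`: it has a
nontrivial normal subgroup `N` of order `3` that is not transitive on `S`, whose
orbits are `{1, xy³, xy⁶}`, `{xy, xy⁴, xy⁷}` and `{xy², xy⁵, xy⁸}`. -/
theorem dihedral_not_quasiprimitive
    (S : Set (DihedralGroup 9))
    (hSdef : S = insert 1 {g | ∃ i : ZMod 9, i ≠ 0 ∧ g = DihedralGroup.sr i})
    (op : DihedralGroup 9 → DihedralGroup 9 → DihedralGroup 9)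
    (hop : IsNRTOp (Subgroup.zpowers (DihedralGroup.sr 0)) S op)
    (R : DihedralGroup 9 → Equiv.Perm S)
    (hR : ∀ s ∈ S, ∀ u : S, ((R s u : S) : DihedralGroup 9) = op u s) :
    ∃ N : Subgroup (Equiv.Perm S),
      N ≤ Subgroup.closure (R '' S) ∧
      (∀ t ∈ Subgroup.closure (R '' S), ∀ n ∈ N, t * n * t⁻¹ ∈ N) ∧
      N ≠ ⊥ ∧ Nat.card N = 3 ∧
      ¬ (∀ u v : S, ∃ n ∈ N, n u = v) ∧
      (∀ u v : S, (∃ n ∈ N, n u = v) ↔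
        (((u : DihedralGroup 9) ∈ ({1, DihedralGroup.sr 3, DihedralGroup.sr 6} :
              Set (DihedralGroup 9)) ∧
          (v : DihedralGroup 9) ∈ ({1, DihedralGroup.sr 3, DihedralGroup.sr 6} :
              Set (DihedralGroup 9))) ∨
         ((u : DihedralGroup 9) ∈ ({DihedralGroup.sr 1, DihedralGroup.sr 4,
              DihedralGroup.sr 7} : Set (DihedralGroup 9)) ∧
          (v : DihedralGroup 9) ∈ ({DihedralGroup.sr 1, DihedralGroup.sr 4,
              DihedralGroup.sr 7} : Set (DihedralGroup 9))) ∨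
         ((u : DihedralGroup 9) ∈ ({DihedralGroup.sr 2, DihedralGroup.sr 5,
              DihedralGroup.sr 8} : Set (DihedralGroup 9)) ∧
          (v : DihedralGroup 9) ∈ ({DihedralGroup.sr 2, DihedralGroup.sr 5,
              DihedralGroup.sr 8} : Set (DihedralGroup 9))))) := by 
  open DNQPaux DihedralGroup in
  -- membership facts
  have memS : ∀ i : ZMod 9, el i ∈ S := by
    intro i
    rw [hSdef]
    by_cases h : i = 0
    · left; simp [el, h]
    · right; exact ⟨i, h, by simp [el, h]⟩
  have exSraw : ∀ w ∈ S, ∃ i : ZMod 9, w = el i := by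
    intro w hw
    rw [hSdef] at hw
    rcases hw with h | ⟨i, hi, h⟩
    · exact ⟨0, by simp [el, h]⟩
    · exact ⟨i, by simp [el, hi, h]⟩
  have exS : ∀ u : S, ∃ i : ZMod 9, (u : DihedralGroup 9) = el i := fun u => exSraw u u.2
  -- the operation, concretely
  have hopv : ∀ i j : ZMod 9, op (el i) (el j) = el (f i j) := by
    intro i j
    obtain ⟨hm, hH⟩ := hop (el i) (memS i) (el j) (memS j)
    obtain ⟨m, hmeq⟩ := exSraw _ hm
    rcases mem_H hH with h | h
    · have hw : op (el i) (el j) = el i * el j := by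
        rw [mul_inv_eq_iff_eq_mul, one_mul] at h; exact h
      rw [hmeq] at hw ⊢
      exact (key_op i j m).1 hw
    · have hw : op (el i) (el j) = sr 0 * (el i * el j) := by
        rw [mul_inv_eq_iff_eq_mul] at h; exact h
      rw [hmeq] at hw ⊢
      exact (key_op i j m).2 hw
  have actR : ∀ (j : ZMod 9) (u : S) (k : ZMod 9), (u : DihedralGroup 9) = el k →
      ((R (el j) u : S) : DihedralGroup 9) = el (f k j) := by
    intro j u k hk
    rw [hR (el j) (memS j) u, hk, hopv]
  set g : Equiv.Perm S := R (el 4) * R (el 1) with hgdef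
  have actg : ∀ (u : S) (k : ZMod 9), (u : DihedralGroup 9) = el k →
      ((g u : S) : DihedralGroup 9) = el (k + 3) := by
    intro u k hk
    have h2 := actR 4 (R (el 1) u) (f k 1) (actR 1 u k hk)
    rw [← key_f1 k]
    simpa [hgdef, Equiv.Perm.mul_apply] using h2
  -- g has order 3
  have hg3 : g ^ 3 = 1 := by
    apply Equiv.ext
    intro u
    obtain ⟨k, hk⟩ := exS u
    apply Subtype.ext
    have h3 : (g ^ 3) u = g (g (g u)) := by
      simp [pow_succ, Equiv.Perm.mul_apply]
    rw [h3, actg _ _ (actg _ _ (actg u k hk)), key_f3 k, Equiv.Perm.one_apply, hk]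
  have hgne : g ≠ 1 := by
    intro h
    have h0 := actg ⟨el 0, memS 0⟩ 0 rfl
    rw [h, Equiv.Perm.one_apply] at h0
    exact key_ne (by simpa using h0)
  haveI : Fact (Nat.Prime 3) := ⟨by norm_num⟩
  -- membership in N
  have Nmem : ∀ n : Equiv.Perm S, n ∈ Subgroup.zpowers g ↔ (n = 1 ∨ n = g ∨ n = g * g) := by
    intro n
    constructor
    · intro hn
      rw [Subgroup.mem_zpowers_iff] at hn
      obtain ⟨k, rfl⟩ := hn
      have hsplit : g ^ k = g ^ (k % 3) := by
        conv_lhs => rw [← Int.emod_add_mul_ediv k 3]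
        rw [zpow_add, zpow_mul, show ((3:ℤ)) = ((3:ℕ):ℤ) from rfl, zpow_natCast, hg3,
          one_zpow, mul_one]
      have hk : k % 3 = 0 ∨ k % 3 = 1 ∨ k % 3 = 2 := by omega
      rcases hk with h | h | h
      · left; rw [hsplit, h, zpow_zero]
      · right; left; rw [hsplit, h, zpow_one]
      · right; right; rw [hsplit, h, show ((2:ℤ)) = 1 + 1 from rfl, zpow_add, zpow_one]
    · rintro (rfl | rfl | rfl)
      · exact one_mem _
      · exact Subgroup.mem_zpowers g
      · exact mul_mem (Subgroup.mem_zpowers g) (Subgroup.mem_zpowers g)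
  -- conjugation facts
  have hR0 : R (el 0) = 1 := by
    apply Equiv.ext
    intro u
    obtain ⟨k, hk⟩ := exS u
    apply Subtype.ext
    rw [actR 0 u k hk, key_f0, Equiv.Perm.one_apply, hk]
  have hcomm : ∀ j : ZMod 9, j ≠ 0 → g * R (el j) * g = R (el j) := by
    intro j hj
    apply Equiv.ext
    intro u
    obtain ⟨k, hk⟩ := exS u
    apply Subtype.ext
    have hL : ((g * R (el j) * g) u : S) = g (R (el j) (g u)) := by
      simp [Equiv.Perm.mul_apply]
    rw [hL, actg _ _ (actR j _ _ (actg u k hk)), key_f2 j k hj, actR j u k hk]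
  have hconj : ∀ w ∈ S, (R w) * g * (R w)⁻¹ = g ∨ (R w) * g * (R w)⁻¹ = g⁻¹ := by
    intro w hw
    obtain ⟨j, rfl⟩ := exSraw w hw
    by_cases hj : j = 0
    · left; subst hj; rw [hR0]; group
    · right
      have h := hcomm j hj
      have h2 : R (el j) * g = g⁻¹ * R (el j) := by
        have h3 := congrArg (g⁻¹ * ·) h
        simp only [← mul_assoc, inv_mul_cancel, one_mul] at h3
        exact h3
      rw [h2, mul_assoc, mul_inv_cancel, mul_one]
  have hnorm : Subgroup.closure (R '' S) ≤ Subgroup.normalizer (Subgroup.zpowers g : Set (Equiv.Perm S)) := by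
    rw [Subgroup.closure_le]
    rintro p ⟨w, hw, rfl⟩
    exact normalizer_of_conj (hconj w hw)
  -- the orbit characterization
  have horb : ∀ u v : S, (∃ n ∈ Subgroup.zpowers g, n u = v) ↔
      (((u : DihedralGroup 9) ∈ ({1, sr 3, sr 6} : Set (DihedralGroup 9)) ∧
        (v : DihedralGroup 9) ∈ ({1, sr 3, sr 6} : Set (DihedralGroup 9))) ∨
       ((u : DihedralGroup 9) ∈ ({sr 1, sr 4, sr 7} : Set (DihedralGroup 9)) ∧
        (v : DihedralGroup 9) ∈ ({sr 1, sr 4, sr 7} : Set (DihedralGroup 9))) ∨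
       ((u : DihedralGroup 9) ∈ ({sr 2, sr 5, sr 8} : Set (DihedralGroup 9)) ∧
        (v : DihedralGroup 9) ∈ ({sr 2, sr 5, sr 8} : Set (DihedralGroup 9)))) := by
    intro u v
    obtain ⟨i, hi⟩ := exS u
    obtain ⟨j, hj⟩ := exS v
    simp only [Set.mem_insert_iff, Set.mem_singleton_iff, hi, hj]
    rw [← key_orb i j]
    constructor
    · rintro ⟨n, hn, rfl⟩
      rcases (Nmem n).mp hn with rfl | rfl | rfl
      · left
        rw [← hj, Equiv.Perm.one_apply, hi]
      · right; left
        rw [← hj, actg u i hi]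
      · right; right
        have : ((g * g) u : S) = g (g u) := by simp [Equiv.Perm.mul_apply]
        rw [← hj, this, actg _ _ (actg u i hi)]
    · rintro (h | h | h)
      · exact ⟨1, one_mem _, Subtype.ext (by rw [Equiv.Perm.one_apply, hi, hj, h])⟩
      · refine ⟨g, Subgroup.mem_zpowers g, Subtype.ext ?_⟩
        rw [actg u i hi, hj, h]
      · refine ⟨g * g, mul_mem (Subgroup.mem_zpowers g) (Subgroup.mem_zpowers g),
          Subtype.ext ?_⟩
        have hgg : ((g * g) u : S) = g (g u) := by simp [Equiv.Perm.mul_apply]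
        rw [hgg, actg _ _ (actg u i hi), hj, h]
  refine ⟨Subgroup.zpowers g, ?_, ?_, ?_, ?_, ?_, horb⟩
  · rw [Subgroup.zpowers_le]
    exact mul_mem (Subgroup.subset_closure ⟨el 4, memS 4, rfl⟩)
      (Subgroup.subset_closure ⟨el 1, memS 1, rfl⟩)
  · intro t ht n hn
    exact (Subgroup.mem_normalizer_iff.mp (hnorm ht) n).mp hn
  · intro h
    exact hgne (Subgroup.zpowers_eq_bot.mp h)
  · rw [Nat.card_zpowers]
    exact orderOf_eq_prime hg3 hgne
  · intro hcontra
    obtain ⟨n, hn, hnv⟩ := hcontra ⟨el 0, memS 0⟩ ⟨el 1, memS 1⟩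
    have h := (horb _ _).mp ⟨n, hn, hnv⟩
    simp only [Set.mem_insert_iff, Set.mem_singleton_iff] at h
    exact key_notrans h
end
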